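/- Let W : ℝ² → ℝ² be continuously differentiable with compact support, let Δ ⊂ ℝ² be a bounded measurable set, let ψ : ℝ × ℝ² → ℝ and v : ℝ × ℝ² → ℝ² be twice continuously differentiable. Write ψ = ψ(0, ·), v = v(0, ·), ψ̇(x) = d/dt|_{t=0} ψ(t, F_t(x)), v̇(x) = d/dt|_{t=0} v(t, F_t(x)). Then the map t ↦ ∫_{F_t(Δ)} ψ(t,·)(y) · div(v(t,·))(y) dy is differentiable at t = 0 and its derivative equals ∫_Δ [ ψ̇(x) div v(x) + ψ(x) div v̇(x) − ψ(x) (∇v(x))^⊤ : ∇W(x) + div W(x) · ψ(x) div v(x) ] dx. -/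

import Mathlib

open MeasureTheory

/-- Jacobian matrix of a vector field on `ℝ²`: `(jac v x) i j = ∂ v_i / ∂ x_j`. -/
noncomputable def jac (v : EuclideanSpace ℝ (Fin 2) → EuclideanSpace ℝ (Fin 2))
    (x : EuclideanSpace ℝ (Fin 2)) : Matrix (Fin 2) (Fin 2) ℝ :=
  Matrix.of fun i j => fderiv ℝ v x (EuclideanSpace.single j (1 : ℝ)) i

/-- Divergence of a vector field: the trace of its Jacobian. -/
noncomputable def divg (v : EuclideanSpace ℝ (Fin 2) → EuclideanSpace ℝ (Fin 2))
    (x : EuclideanSpace ℝ (Fin 2)) : ℝ :=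
  Matrix.trace (jac v x)

/-- Frobenius inner product of matrices: `A : B = ∑_{j,k} A_{jk} B_{jk}`. -/
def frob (A B : Matrix (Fin 2) (Fin 2) ℝ) : ℝ :=
  ∑ j, ∑ k, A j k * B j k

/-!
Pull the integral back to `Δ` along `F_t(x) = x + t W(x)`. For small `t`, `F_t` is injective on
`Δ` (`W` is Lipschitz on the compact closure of `Δ`, so `F_t` is a small Lipschitz perturbation
of the identity) and its Jacobian `det (I + t ∇W) = 1 + t div W + t² det ∇W` is positive there,
so the change of variables formula turns the integral into
`∫_Δ ψ(t, F_t x) div v(t, ·)(F_t x) det (I + t ∇W(x)) dx`.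
This integrand and its `t`-derivative are jointly continuous, hence bounded on compact sets, and
we differentiate under the integral sign. At `t = 0` the derivative of `div v(t, ·)` along
`t ↦ (t, F_t x)` is `div v̇ - (∇v)ᵀ : ∇W`: differentiating `v̇ = ∂ₜv + ∇v W` in space produces
`∇v ∇W` plus a mixed second derivative of `v`, which is symmetric.
-/

open Filter Topology Set
open scoped Matrix

noncomputable section

section PerturbationOfIdentity

variable {E F : Type*} [NormedAddCommGroup E] [NormedSpace ℝ E]
  [NormedAddCommGroup F] [NormedSpace ℝ F]

theorem hasDerivAt_prodMk_add_smul (x w : E) (t : ℝ) :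
    HasDerivAt (fun s : ℝ => (s, x + s • w)) ((1 : ℝ), w) t :=
  (hasDerivAt_id t).prodMk
    (((hasDerivAt_id t).smul_const w).const_add x |>.congr_deriv (one_smul ℝ w))

theorem deriv_comp_prodMk_add_smul {f : ℝ × E → F} (hf : Differentiable ℝ f) (x w : E) :
    deriv (fun t : ℝ => f (t, x + t • w)) 0 = fderiv ℝ f (0, x) (1, w) := by
  have h := (hf _).hasFDerivAt.comp_hasDerivAt 0 (hasDerivAt_prodMk_add_smul x w 0)
  simpa [Function.comp_def] using h.deriv

theorem fderiv_slice {f : ℝ × E → F} {t : ℝ} {y : E} (hf : DifferentiableAt ℝ f (t, y)) :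
    fderiv ℝ (fun z => f (t, z)) y = (fderiv ℝ f (t, y)).comp (ContinuousLinearMap.inr ℝ ℝ E) :=
  (hf.hasFDerivAt.comp y ((hasFDerivAt_const t y).prodMk (hasFDerivAt_id y))).fderiv

theorem injOn_add_smul_of_lipschitzOnWith {W : E → E} {s : Set E} {K : NNReal}
    (hW : LipschitzOnWith K W s) {t : ℝ} (ht : |t| * K < 1) :
    InjOn (fun x => x + t • W x) s := by
  intro x hx y hy hxy
  have hdiff : x - y = t • (W y - W x) := by
    rw [smul_sub, sub_eq_sub_iff_add_eq_add, add_comm _ y]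
    exact hxy
  have hle : ‖x - y‖ ≤ |t| * K * ‖x - y‖ :=
    calc ‖x - y‖ = ‖t • (W y - W x)‖ := by rw [hdiff]
      _ = |t| * ‖W y - W x‖ := by rw [norm_smul, Real.norm_eq_abs]
      _ ≤ |t| * (K * ‖y - x‖) := by gcongr; exact hW.norm_sub_le hy hx
      _ = |t| * K * ‖x - y‖ := by rw [norm_sub_rev]; ring
  have : ‖x - y‖ = 0 := by nlinarith [norm_nonneg (x - y)]
  exact sub_eq_zero.mp (norm_eq_zero.mp this)

theorem continuous_prodMk_add_smul {W : E → E} (hW : Continuous W) :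
    Continuous fun p : ℝ × E => (p.1, p.2 + p.1 • W p.2) :=
  continuous_fst.prodMk (continuous_snd.add (continuous_fst.smul (hW.comp continuous_snd)))

theorem continuous_det_id_add_smul_fderiv {W : E → E} (hW : ContDiff ℝ 1 W) :
    Continuous fun p : ℝ × E => (ContinuousLinearMap.id ℝ E + p.1 • fderiv ℝ W p.2).det :=
  ContinuousLinearMap.continuous_det.comp (continuous_const.add
    (continuous_fst.smul ((hW.continuous_fderiv one_ne_zero).comp continuous_snd)))

theorem eventually_det_id_add_smul_fderiv_pos {W : E → E} (hW : ContDiff ℝ 1 W) {K : Set E}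
    (hK : IsCompact K) :
    ∀ᶠ t in 𝓝 (0 : ℝ), ∀ x ∈ K, 0 < (ContinuousLinearMap.id ℝ E + t • fderiv ℝ W x).det := by
  refine hK.eventually_forall_of_forall_eventually fun x _ => ?_
  exact continuousAt_const.eventually_lt (continuous_det_id_add_smul_fderiv hW).continuousAt
    (by simp [ContinuousLinearMap.det])

variable [FiniteDimensional ℝ E]

theorem eventually_injOn_add_smul {W : E → E} (hW : ContDiff ℝ 1 W) {s : Set E}
    (hs : Bornology.IsBounded s) :
    ∀ᶠ t in 𝓝 (0 : ℝ), InjOn (fun x => x + t • W x) s := by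
  obtain ⟨K, hK⟩ := hW.locallyLipschitz.locallyLipschitzOn.exists_lipschitzOnWith_of_compact
    hs.isCompact_closure
  have hsmall : ∀ᶠ t : ℝ in 𝓝 0, |t| * (K : ℝ) < 1 := by
    have hcont : Continuous fun t : ℝ => |t| * K := by fun_prop
    exact hcont.continuousAt.eventually_lt continuousAt_const (by simp)
  exact hsmall.mono fun t ht => injOn_add_smul_of_lipschitzOnWith (hK.mono subset_closure) ht

def spatialTrace : ((ℝ × E) →L[ℝ] E) →L[ℝ] ℝ :=
  LinearMap.toContinuousLinearMap
    { toFun := fun L => LinearMap.trace ℝ E (L.comp (ContinuousLinearMap.inr ℝ ℝ E))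
      map_add' := fun L M => by simp [ContinuousLinearMap.add_comp]
      map_smul' := fun c L => by simp [ContinuousLinearMap.smul_comp] }

theorem spatialTrace_apply (L : (ℝ × E) →L[ℝ] E) :
    spatialTrace L = LinearMap.trace ℝ E (L.comp (ContinuousLinearMap.inr ℝ ℝ E)) := rfl

end PerturbationOfIdentity

theorem LinearMap.det_one_add_smul_of_finrank_eq_two {K V : Type*} [Field K] [AddCommGroup V]
    [Module K V] (hV : Module.finrank K V = 2) (L : V →ₗ[K] V) (t : K) :
    LinearMap.det (1 + t • L) = 1 + t * LinearMap.trace K V L + t ^ 2 * LinearMap.det L := by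
  have : Module.Finite K V := Module.finite_of_finrank_eq_succ hV
  let b := Module.finBasisOfFinrankEq K V hV
  rw [← LinearMap.det_toMatrix b, ← LinearMap.det_toMatrix b L,
    LinearMap.trace_eq_matrix_trace K b, map_add, map_smul, LinearMap.toMatrix_one,
    Matrix.det_fin_two, Matrix.det_fin_two, Matrix.trace_fin_two]
  simp only [Matrix.add_apply, Matrix.smul_apply, smul_eq_mul, Matrix.one_apply_eq,
    Matrix.one_apply_ne zero_ne_one, Matrix.one_apply_ne one_ne_zero]
  ring

theorem ContinuousLinearMap.hasDerivAt_det_id_add_smul {E : Type*} [NormedAddCommGroup E]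
    [NormedSpace ℝ E] (hE : Module.finrank ℝ E = 2) (L : E →L[ℝ] E) (t : ℝ) :
    HasDerivAt (fun s : ℝ => (ContinuousLinearMap.id ℝ E + s • L).det)
      (LinearMap.trace ℝ E L + 2 * t * L.det) t := by
  have hpoly : (fun s : ℝ => (ContinuousLinearMap.id ℝ E + s • L).det)
      = fun s => 1 + s * LinearMap.trace ℝ E L + s ^ 2 * L.det := by
    funext s
    exact LinearMap.det_one_add_smul_of_finrank_eq_two hE (L : E →ₗ[ℝ] E) s
  have h := (((hasDerivAt_id' t).mul_const (LinearMap.trace ℝ E L)).const_add 1).add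
    ((hasDerivAt_pow 2 t).mul_const L.det)
  rw [hpoly]
  exact h.congr_deriv (by push_cast; ring)

theorem hasDerivAt_setIntegral_of_continuous {X G : Type*} [MetricSpace X] [ProperSpace X]
    [MeasurableSpace X] [BorelSpace X] {μ : Measure X} [IsFiniteMeasureOnCompacts μ]
    [NormedAddCommGroup G] [NormedSpace ℝ G] {s : Set X} (hs : Bornology.IsBounded s)
    {F F' : ℝ → X → G} (hF : Continuous fun p : ℝ × X => F p.1 p.2)
    (hF' : Continuous fun p : ℝ × X => F' p.1 p.2)
    (hderiv : ∀ t x, HasDerivAt (F · x) (F' t x) t) (t₀ : ℝ) :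
    HasDerivAt (fun t => ∫ x in s, F t x ∂μ) (∫ x in s, F' t₀ x ∂μ) t₀ := by
  have hK : IsCompact (Metric.closedBall t₀ 1 ×ˢ closure s) :=
    (isCompact_closedBall t₀ 1).prod hs.isCompact_closure
  obtain ⟨C, hC⟩ := hK.exists_bound_of_continuousOn hF'.continuousOn
  have hslice : ∀ {H : ℝ → X → G}, (Continuous fun p : ℝ × X => H p.1 p.2) → ∀ t,
      Continuous (H t) :=
    fun hH t => hH.comp (Continuous.prodMk_right t)
  refine (hasDerivAt_integral_of_dominated_loc_of_deriv_le (bound := fun _ => C)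
    (Metric.ball_mem_nhds t₀ one_pos)
    (Eventually.of_forall fun t => (hslice hF t).aestronglyMeasurable)
    (((hslice hF t₀).continuousOn.integrableOn_compact hs.isCompact_closure).mono_set
      subset_closure)
    (hslice hF' t₀).aestronglyMeasurable ?_ ?_ ?_).2
  · refine ae_mono (Measure.restrict_mono subset_closure le_rfl)
      (ae_restrict_of_forall_mem isClosed_closure.measurableSet fun x hx t ht => ?_)
    exact hC (t, x) ⟨Metric.ball_subset_closedBall ht, hx⟩
  · exact integrableOn_const
      ((measure_mono subset_closure).trans_lt hs.isCompact_closure.measure_lt_top).ne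
  · exact Eventually.of_forall fun x t _ => hderiv t x

theorem frob_transpose_eq_trace_mul (A B : Matrix (Fin 2) (Fin 2) ℝ) :
    frob Aᵀ B = (A * B).trace := by
  simp only [frob, Matrix.trace, Matrix.diag, Matrix.mul_apply, Matrix.transpose_apply]
  rw [Finset.sum_comm]

local notation "ℝ²" => EuclideanSpace ℝ (Fin 2)

theorem jac_eq_toMatrix (f : ℝ² → ℝ²) (x : ℝ²) :
    jac f x = LinearMap.toMatrix (EuclideanSpace.basisFun (Fin 2) ℝ).toBasis
      (EuclideanSpace.basisFun (Fin 2) ℝ).toBasis (fderiv ℝ f x) := by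
  ext i j
  simp [jac, LinearMap.toMatrix_apply]

theorem divg_eq_trace (f : ℝ² → ℝ²) (x : ℝ²) :
    divg f x = LinearMap.trace ℝ ℝ² (fderiv ℝ f x) := by
  rw [divg, jac_eq_toMatrix,
    LinearMap.trace_eq_matrix_trace ℝ (EuclideanSpace.basisFun (Fin 2) ℝ).toBasis]

theorem frob_transpose_jac_eq_trace_comp (f g : ℝ² → ℝ²) (x : ℝ²) :
    frob (jac f x)ᵀ (jac g x) = LinearMap.trace ℝ ℝ² ((fderiv ℝ f x).comp (fderiv ℝ g x)) := by
  rw [frob_transpose_eq_trace_mul, jac_eq_toMatrix, jac_eq_toMatrix, ← LinearMap.toMatrix_comp,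
    ← LinearMap.trace_eq_matrix_trace]
  rfl

theorem continuous_divg {f : ℝ² → ℝ²} (hf : ContDiff ℝ 1 f) : Continuous (divg f) := by
  simp only [funext (divg_eq_trace f)]
  exact (LinearMap.trace ℝ ℝ² ∘ₗ ContinuousLinearMap.coeLM ℝ).continuous_of_finiteDimensional.comp
    (hf.continuous_fderiv one_ne_zero)

theorem divg_slice {v : ℝ × ℝ² → ℝ²} {t : ℝ} {y : ℝ²} (hv : DifferentiableAt ℝ v (t, y)) :
    divg (fun z => v (t, z)) y = spatialTrace (fderiv ℝ v (t, y)) := by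
  rw [divg_eq_trace, fderiv_slice hv, spatialTrace_apply]

theorem divg_deriv_comp_prodMk_add_smul {v : ℝ × ℝ² → ℝ²} (hv : ContDiff ℝ 2 v) {W : ℝ² → ℝ²}
    (hW : Differentiable ℝ W) (x : ℝ²) :
    divg (fun z => deriv (fun t : ℝ => v (t, z + t • W z)) 0) x
      = spatialTrace (fderiv ℝ (fderiv ℝ v) (0, x) (1, W x))
        + frob (jac (fun z => v (0, z)) x)ᵀ (jac W x) := by
  have hv1 : Differentiable ℝ v := hv.differentiable two_ne_zero
  have hv2 : Differentiable ℝ (fderiv ℝ v) :=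
    (hv.fderiv_right (m := 1) one_add_one_eq_two.le).differentiable one_ne_zero
  have hvdot : (fun z => deriv (fun t : ℝ => v (t, z + t • W z)) 0)
      = fun z => fderiv ℝ v (0, z) (1, W z) :=
    funext fun z => deriv_comp_prodMk_add_smul hv1 z (W z)
  have hDv : HasFDerivAt (fun z : ℝ² => fderiv ℝ v (0, z))
      ((fderiv ℝ (fderiv ℝ v) (0, x)).comp (ContinuousLinearMap.inr ℝ ℝ ℝ²)) x :=
    (hv2 _).hasFDerivAt.comp x ((hasFDerivAt_const 0 x).prodMk (hasFDerivAt_id x))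
  have hsymm : IsSymmSndFDerivAt ℝ v (0, x) :=
    hv.contDiffAt.isSymmSndFDerivAt (by simp [minSmoothness_of_isRCLikeNormedField])
  rw [hvdot, divg_eq_trace,
    (hDv.clm_apply ((hasFDerivAt_const 1 x).prodMk (hW x).hasFDerivAt)).fderiv,
    ContinuousLinearMap.toLinearMap_add, map_add,
    add_comm, frob_transpose_jac_eq_trace_comp, fderiv_slice (hv1 _), spatialTrace_apply]
  -- The `∇v ∇W` summands agree definitionally; the mixed second derivatives by symmetry.
  congr 2
  ext e
  simp [hsymm (0, e) (1, W x)]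

def pullbackIntegrand (W : ℝ² → ℝ²) (ψ : ℝ × ℝ² → ℝ) (v : ℝ × ℝ² → ℝ²) (t : ℝ) (x : ℝ²) : ℝ :=
  ψ (t, x + t • W x) * spatialTrace (fderiv ℝ v (t, x + t • W x))
    * (ContinuousLinearMap.id ℝ ℝ² + t • fderiv ℝ W x).det

def pullbackIntegrandDeriv (W : ℝ² → ℝ²) (ψ : ℝ × ℝ² → ℝ) (v : ℝ × ℝ² → ℝ²) (t : ℝ) (x : ℝ²) :
    ℝ :=
  fderiv ℝ ψ (t, x + t • W x) (1, W x) * spatialTrace (fderiv ℝ v (t, x + t • W x))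
      * (ContinuousLinearMap.id ℝ ℝ² + t • fderiv ℝ W x).det
    + ψ (t, x + t • W x) * spatialTrace (fderiv ℝ (fderiv ℝ v) (t, x + t • W x) (1, W x))
      * (ContinuousLinearMap.id ℝ ℝ² + t • fderiv ℝ W x).det
    + ψ (t, x + t • W x) * spatialTrace (fderiv ℝ v (t, x + t • W x))
      * (divg W x + 2 * t * (fderiv ℝ W x).det)

section Pullback

variable {W : ℝ² → ℝ²} {ψ : ℝ × ℝ² → ℝ} {v : ℝ × ℝ² → ℝ²}

theorem setIntegral_image_add_smul {Δ : Set ℝ²} (hΔ : MeasurableSet Δ) (hW : Differentiable ℝ W)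
    (hv : Differentiable ℝ v) {t : ℝ} (hinj : InjOn (fun x => x + t • W x) Δ)
    (hpos : ∀ x ∈ Δ, 0 < (ContinuousLinearMap.id ℝ ℝ² + t • fderiv ℝ W x).det) :
    ∫ y in (fun x => x + t • W x) '' Δ, ψ (t, y) * divg (fun z => v (t, z)) y
      = ∫ x in Δ, pullbackIntegrand W ψ v t x := by
  have hF : ∀ x ∈ Δ, HasFDerivWithinAt (fun x => x + t • W x)
      (ContinuousLinearMap.id ℝ ℝ² + t • fderiv ℝ W x) Δ x := fun x _ =>
    ((hasFDerivAt_id x).add ((hW x).hasFDerivAt.const_smul t)).hasFDerivWithinAt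
  rw [integral_image_eq_integral_abs_det_fderiv_smul volume hΔ hF hinj]
  refine setIntegral_congr_fun hΔ fun x hx => ?_
  rw [abs_of_pos (hpos x hx), smul_eq_mul, divg_slice (hv _), pullbackIntegrand]
  ring

theorem hasDerivAt_pullbackIntegrand (hψ : ContDiff ℝ 2 ψ) (hv : ContDiff ℝ 2 v) (t : ℝ)
    (x : ℝ²) :
    HasDerivAt (pullbackIntegrand W ψ v · x) (pullbackIntegrandDeriv W ψ v t x) t := by
  have hcurve := hasDerivAt_prodMk_add_smul x (W x) t
  have hψ' := ((hψ.differentiable two_ne_zero) _).hasFDerivAt.comp_hasDerivAt t hcurve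
  have hv' := (((hv.fderiv_right (m := 1) one_add_one_eq_two.le).differentiable one_ne_zero)
    _).hasFDerivAt.comp_hasDerivAt t hcurve
  have hdet := ContinuousLinearMap.hasDerivAt_det_id_add_smul (finrank_euclideanSpace_fin)
    (fderiv ℝ W x) t
  rw [← divg_eq_trace] at hdet
  have h := (hψ'.mul (spatialTrace.hasFDerivAt.comp_hasDerivAt t hv')).mul hdet
  refine HasDerivAt.congr_deriv (f := fun s => pullbackIntegrand W ψ v s x) h ?_
  simp only [pullbackIntegrandDeriv, Function.comp_apply, Pi.mul_apply]
  ring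

theorem continuous_pullbackIntegrand (hW : ContDiff ℝ 1 W) (hψ : ContDiff ℝ 2 ψ)
    (hv : ContDiff ℝ 2 v) : Continuous fun p : ℝ × ℝ² => pullbackIntegrand W ψ v p.1 p.2 := by
  have hc := continuous_prodMk_add_smul hW.continuous
  exact ((hψ.continuous.comp hc).mul
    (spatialTrace.continuous.comp ((hv.continuous_fderiv two_ne_zero).comp hc))).mul
    (continuous_det_id_add_smul_fderiv hW)

theorem continuous_pullbackIntegrandDeriv (hW : ContDiff ℝ 1 W) (hψ : ContDiff ℝ 2 ψ)
    (hv : ContDiff ℝ 2 v) :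
    Continuous fun p : ℝ × ℝ² => pullbackIntegrandDeriv W ψ v p.1 p.2 := by
  have hc := continuous_prodMk_add_smul hW.continuous
  have hdir : Continuous fun p : ℝ × ℝ² => ((1 : ℝ), W p.2) :=
    continuous_const.prodMk (hW.continuous.comp continuous_snd)
  have hψc := hψ.continuous.comp hc
  have hDψ := ((hψ.continuous_fderiv two_ne_zero).comp hc).clm_apply hdir
  have hDv := spatialTrace.continuous.comp ((hv.continuous_fderiv two_ne_zero).comp hc)
  have hD2v := spatialTrace.continuous.comp
    ((((hv.fderiv_right (m := 1) one_add_one_eq_two.le).continuous_fderiv one_ne_zero).comp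
      hc).clm_apply hdir)
  have hJ := continuous_det_id_add_smul_fderiv hW
  have hJ' : Continuous fun p : ℝ × ℝ² => divg W p.2 + 2 * p.1 * (fderiv ℝ W p.2).det :=
    ((continuous_divg hW).comp continuous_snd).add ((continuous_const.mul continuous_fst).mul
      ((ContinuousLinearMap.continuous_det.comp (hW.continuous_fderiv one_ne_zero)).comp
        continuous_snd))
  exact (((hDψ.mul hDv).mul hJ).add ((hψc.mul hD2v).mul hJ)).add ((hψc.mul hDv).mul hJ')

theorem pullbackIntegrandDeriv_zero (hW : ContDiff ℝ 1 W) (hψ : ContDiff ℝ 2 ψ)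
    (hv : ContDiff ℝ 2 v) (x : ℝ²) :
    pullbackIntegrandDeriv W ψ v 0 x
      = deriv (fun t : ℝ => ψ (t, x + t • W x)) 0 * divg (fun z => v (0, z)) x
        + ψ (0, x) * divg (fun z => deriv (fun t : ℝ => v (t, z + t • W z)) 0) x
        - ψ (0, x) * frob (jac (fun z => v (0, z)) x)ᵀ (jac W x)
        + divg W x * (ψ (0, x) * divg (fun z => v (0, z)) x) := by
  rw [deriv_comp_prodMk_add_smul (hψ.differentiable two_ne_zero),
    divg_deriv_comp_prodMk_add_smul hv (hW.differentiable one_ne_zero),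
    divg_slice ((hv.differentiable two_ne_zero) _), pullbackIntegrandDeriv]
  have hdet_id : (ContinuousLinearMap.id ℝ ℝ² + (0 : ℝ) • fderiv ℝ W x).det = 1 := by
    simp [ContinuousLinearMap.det]
  simp only [zero_smul, add_zero, zero_mul, mul_zero, hdet_id]
  ring

end Pullback

theorem shape_derivative_L6_general
    (W : EuclideanSpace ℝ (Fin 2) → EuclideanSpace ℝ (Fin 2))
    (hW : ContDiff ℝ 1 W)
    (Δ : Set (EuclideanSpace ℝ (Fin 2))) (hΔm : MeasurableSet Δ)
    (hΔb : Bornology.IsBounded Δ)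
    (ψ : ℝ × EuclideanSpace ℝ (Fin 2) → ℝ)
    (v : ℝ × EuclideanSpace ℝ (Fin 2) → EuclideanSpace ℝ (Fin 2))
    (hψ : ContDiff ℝ 2 ψ) (hv : ContDiff ℝ 2 v)
    (ψ₀ ψdot : EuclideanSpace ℝ (Fin 2) → ℝ)
    (v₀ vdot : EuclideanSpace ℝ (Fin 2) → EuclideanSpace ℝ (Fin 2))
    (hψ₀ : ψ₀ = fun z => ψ ((0 : ℝ), z))
    (hψdot : ψdot = fun z => deriv (fun t : ℝ => ψ (t, z + t • W z)) 0)
    (hv₀ : v₀ = fun z => v ((0 : ℝ), z))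
    (hvdot : vdot = fun z => deriv (fun t : ℝ => v (t, z + t • W z)) 0) :
    HasDerivAt
      (fun t : ℝ => ∫ y in (fun x => x + t • W x) '' Δ,
        ψ (t, y) * divg (fun z => v (t, z)) y)
      (∫ x in Δ,
        (ψdot x * divg v₀ x
          + ψ₀ x * divg vdot x
          - ψ₀ x * frob (jac v₀ x).transpose (jac W x)
          + divg W x * (ψ₀ x * divg v₀ x))) (0 : ℝ) := by
  subst hψ₀ hψdot hv₀ hvdot
  have hpullback : (fun t : ℝ => ∫ y in (fun x => x + t • W x) '' Δ,
      ψ (t, y) * divg (fun z => v (t, z)) y) =ᶠ[𝓝 0]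
      fun t => ∫ x in Δ, pullbackIntegrand W ψ v t x := by
    filter_upwards [eventually_injOn_add_smul hW hΔb,
      eventually_det_id_add_smul_fderiv_pos hW hΔb.isCompact_closure] with t hinj hpos
    exact setIntegral_image_add_smul hΔm (hW.differentiable one_ne_zero)
      (hv.differentiable two_ne_zero) hinj fun x hx => hpos x (subset_closure hx)
  have hderiv := hasDerivAt_setIntegral_of_continuous (μ := volume) hΔb
    (continuous_pullbackIntegrand hW hψ hv) (continuous_pullbackIntegrandDeriv hW hψ hv)
    (hasDerivAt_pullbackIntegrand hψ hv) 0
  exact (hderiv.congr_of_eventuallyEq hpullback).congr_deriv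
    (setIntegral_congr_fun hΔm fun x _ => pullbackIntegrandDeriv_zero hW hψ hv x)

/-- Shape derivative of the incompressibility term
`t ↦ ∫_{F_t(Δ)} ψ(t,·) div(v(t,·)) dy`. -/
theorem shape_derivative_L6
    (W : EuclideanSpace ℝ (Fin 2) → EuclideanSpace ℝ (Fin 2))
    (hW : ContDiff ℝ 1 W) (hWc : HasCompactSupport W)
    (Δ : Set (EuclideanSpace ℝ (Fin 2))) (hΔm : MeasurableSet Δ)
    (hΔb : Bornology.IsBounded Δ)
    (ψ : ℝ × EuclideanSpace ℝ (Fin 2) → ℝ)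
    (v : ℝ × EuclideanSpace ℝ (Fin 2) → EuclideanSpace ℝ (Fin 2))
    (hψ : ContDiff ℝ 2 ψ) (hv : ContDiff ℝ 2 v)
    (ψ₀ ψdot : EuclideanSpace ℝ (Fin 2) → ℝ)
    (v₀ vdot : EuclideanSpace ℝ (Fin 2) → EuclideanSpace ℝ (Fin 2))
    (hψ₀ : ψ₀ = fun z => ψ ((0 : ℝ), z))
    (hψdot : ψdot = fun z => deriv (fun t : ℝ => ψ (t, z + t • W z)) 0)
    (hv₀ : v₀ = fun z => v ((0 : ℝ), z))
    (hvdot : vdot = fun z => deriv (fun t : ℝ => v (t, z + t • W z)) 0) :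
    HasDerivAt
      (fun t : ℝ => ∫ y in (fun x => x + t • W x) '' Δ,
        ψ (t, y) * divg (fun z => v (t, z)) y)
      (∫ x in Δ,
        (ψdot x * divg v₀ x
          + ψ₀ x * divg vdot x
          - ψ₀ x * frob (jac v₀ x).transpose (jac W x)
          + divg W x * (ψ₀ x * divg v₀ x))) (0 : ℝ) :=
  shape_derivative_L6_general W hW Δ hΔm hΔb ψ v hψ hv ψ₀ ψdot v₀ vdot hψ₀ hψdot hv₀ hvdot

end
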